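/- (Example: the manifold M(A_40) has no Spin structure.) Let A_40 be the 5×5 Bott matrix whose rows are (0,0,1,0,1), (0,0,1,1,0), (0,0,0,1,1), (0,0,0,0,0), (0,0,0,0,0). Then there exists no group homomorphism ε from Γ(A_40) to the group of units of Cl_5 satisfying ε(s_1) ∈ {ι(e_3)ι(e_5), −ι(e_3)ι(e_5)} and ε(s_2) ∈ {ι(e_3)ι(e_4), −ι(e_3)ι(e_4)}. -/

import Mathlib

noncomputable section

open Matrix

/-- The Euclidean group `E(n)`: pairs `(M, b)` with `M ∈ O(n)`, `b ∈ ℝⁿ`,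
acting on `ℝⁿ` by `x ↦ M x + b`. -/
@[ext]
structure EuclideanGroup (n : ℕ) where
  M : Matrix.orthogonalGroup (Fin n) ℝ
  b : Fin n → ℝ

namespace EuclideanGroup

variable {n : ℕ}

instance : Mul (EuclideanGroup n) :=
  ⟨fun g h => ⟨g.M * h.M, (g.M : Matrix (Fin n) (Fin n) ℝ) *ᵥ h.b + g.b⟩⟩

instance : One (EuclideanGroup n) := ⟨⟨1, 0⟩⟩

instance : Inv (EuclideanGroup n) :=
  ⟨fun g => ⟨g.M⁻¹, -(star (g.M : Matrix (Fin n) (Fin n) ℝ) *ᵥ g.b)⟩⟩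

@[simp] theorem mul_M (g h : EuclideanGroup n) : (g * h).M = g.M * h.M := rfl
@[simp] theorem mul_b (g h : EuclideanGroup n) :
    (g * h).b = (g.M : Matrix (Fin n) (Fin n) ℝ) *ᵥ h.b + g.b := rfl
@[simp] theorem one_M : (1 : EuclideanGroup n).M = 1 := rfl
@[simp] theorem one_b : (1 : EuclideanGroup n).b = 0 := rfl
@[simp] theorem inv_M (g : EuclideanGroup n) : g⁻¹.M = g.M⁻¹ := rfl
@[simp] theorem inv_b (g : EuclideanGroup n) :
    g⁻¹.b = -(star (g.M : Matrix (Fin n) (Fin n) ℝ) *ᵥ g.b) := rfl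

instance : Group (EuclideanGroup n) where
  mul_assoc a b c :=
    EuclideanGroup.ext (mul_assoc _ _ _)
      (by simp [Matrix.mulVec_add, Matrix.mulVec_mulVec, add_assoc])
  one_mul a := by ext <;> simp
  mul_one a := by ext <;> simp
  inv_mul_cancel a :=
    EuclideanGroup.ext (inv_mul_cancel _) (by exact add_neg_cancel _)

end EuclideanGroup


/-- A Bott matrix: a strictly upper triangular binary matrix
(entries `0` or `1`, and `A i j = 0` whenever `j ≤ i`). -/
def IsBottMatrix {n : ℕ} (A : Matrix (Fin n) (Fin n) ℕ) : Prop :=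
  (∀ i j : Fin n, A i j = 0 ∨ A i j = 1) ∧ ∀ i j : Fin n, (j : ℕ) ≤ (i : ℕ) → A i j = 0

/-- The diagonal matrix `D_i` with `(k,k)`-entry `(-1) ^ (A i k)`. -/
def Dmat {n : ℕ} (A : Matrix (Fin n) (Fin n) ℕ) (i : Fin n) : Matrix (Fin n) (Fin n) ℝ :=
  Matrix.diagonal fun k => (-1 : ℝ) ^ (A i k)

theorem diagonal_pm_mem_orthogonalGroup {n : ℕ} (d : Fin n → ℝ)
    (hd : ∀ k, d k = 1 ∨ d k = -1) :
    Matrix.diagonal d ∈ Matrix.orthogonalGroup (Fin n) ℝ := by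
  rw [Matrix.mem_orthogonalGroup_iff]
  have : (Matrix.diagonal d)ᵀ = Matrix.diagonal d := by
    simp [Matrix.star_eq_conjTranspose, Matrix.diagonal_conjTranspose]
  rw [this, Matrix.diagonal_mul_diagonal]
  have h1 : (fun k => d k * d k) = fun _ => (1 : ℝ) :=
    funext fun k => by rcases hd k with h | h <;> simp [h]
  rw [h1, Matrix.diagonal_one]

theorem Dmat_mem {n : ℕ} (A : Matrix (Fin n) (Fin n) ℕ) (i : Fin n) :
    Dmat A i ∈ Matrix.orthogonalGroup (Fin n) ℝ := by
  refine diagonal_pm_mem_orthogonalGroup _ fun k => ?_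
  rcases Nat.even_or_odd (A i k) with h | h
  · exact Or.inl (h.neg_one_pow)
  · exact Or.inr (h.neg_one_pow)

/-- `D_i` as an element of the orthogonal group. -/
def Dorth {n : ℕ} (A : Matrix (Fin n) (Fin n) ℕ) (i : Fin n) :
    Matrix.orthogonalGroup (Fin n) ℝ :=
  ⟨Dmat A i, Dmat_mem A i⟩

/-- The generators `s_i` of the Bieberbach group of the real Bott manifold `M(A)`:
for `i` with `i + 1 < n` (i.e. the mathematical indices `1 ≤ i ≤ n - 1`),
`s_i = (D_i, (1/2) e_i)`, and the last generator (mathematical index `n`) is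
`s_n = (I, e_n)`.  (Indices are `0`-based.) -/
def sgen {n : ℕ} (A : Matrix (Fin n) (Fin n) ℕ) (i : Fin n) : EuclideanGroup n :=
  if (i : ℕ) + 1 = n then ⟨1, Pi.single i 1⟩
  else ⟨Dorth A i, Pi.single i (1 / 2 : ℝ)⟩

/-- The fundamental group `Γ(A)` of the real Bott manifold `M(A)`, as the subgroup
of `E(n)` generated by `s_1, …, s_n`. -/
def BottGroup {n : ℕ} (A : Matrix (Fin n) (Fin n) ℕ) : Subgroup (EuclideanGroup n) :=
  Subgroup.closure (Set.range (sgen A))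

theorem sgen_mem {n : ℕ} (A : Matrix (Fin n) (Fin n) ℕ) (i : Fin n) :
    sgen A i ∈ BottGroup A :=
  Subgroup.subset_closure (Set.mem_range_self i)

/-- The homomorphism sending an affine isometry `(M, b)` to its linear part `M`. -/
def linearPart (n : ℕ) : EuclideanGroup n →* Matrix.orthogonalGroup (Fin n) ℝ where
  toFun g := g.M
  map_one' := rfl
  map_mul' _ _ := rfl

/-- The standard positive definite quadratic form `Q(x) = x₁² + ⋯ + xₙ²` on `ℝⁿ`. -/
def Qstd (n : ℕ) : QuadraticForm ℝ (Fin n → ℝ) :=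
  QuadraticMap.weightedSumSquares ℝ (fun _ : Fin n => (1 : ℝ))

/-- The Clifford algebra `Cl_n` of `Q(x) = x₁² + ⋯ + xₙ²`. -/
abbrev Cl (n : ℕ) := CliffordAlgebra (Qstd n)

/-- For a finite set `S = {s₁ < s₂ < ⋯ < s_k} ⊆ {1, …, n}`, the product
`e_S = ι(e_{s₁}) ι(e_{s₂}) ⋯ ι(e_{s_k})` in `Cl_n` (with `e_∅ = 1`). -/
def eProd {n : ℕ} (S : Finset (Fin n)) : Cl n :=
  ((S.sort (· ≤ ·)).map fun j => CliffordAlgebra.ι (Qstd n) (Pi.single j 1)).prod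


/-- The Bott matrix `A₄₀` from Nazra's list of `5`-dimensional oriented real Bott
manifolds. -/
def A40 : Matrix (Fin 5) (Fin 5) ℕ :=
  !![0,0,1,0,1; 0,0,1,1,0; 0,0,0,1,1; 0,0,0,0,0; 0,0,0,0,0]
/-!
Since `A₄₀` has `a₁₂ = a₂₁ = 0`, the generators `s₁` and `s₂` commute in `Γ(A₄₀)`, so their
images under `ε` would be commuting units. But `±ι(e₃)ι(e₅)` and `±ι(e₃)ι(e₄)` anticommute in
`Cl₅`, and two units that both commute and anticommute force `2 = 0`.
-/

section BottGroup

variable {n : ℕ} (A : Matrix (Fin n) (Fin n) ℕ)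

theorem sgen_of_ne_last {i : Fin n} (hi : (i : ℕ) + 1 ≠ n) :
    sgen A i = ⟨Dorth A i, Pi.single i (1 / 2 : ℝ)⟩ :=
  if_neg hi

theorem Dorth_commute (i j : Fin n) : Commute (Dorth A i) (Dorth A j) :=
  Subtype.ext (Matrix.commute_diagonal _ _).eq

variable {A}

theorem sgen_commute {i j : Fin n} (hi : (i : ℕ) + 1 ≠ n) (hj : (j : ℕ) + 1 ≠ n)
    (hij : A i j = 0) (hji : A j i = 0) : Commute (sgen A i) (sgen A j) := by
  rw [sgen_of_ne_last A hi, sgen_of_ne_last A hj]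
  refine EuclideanGroup.ext (Dorth_commute A i j).eq ?_
  change Dmat A i *ᵥ _ + _ = Dmat A j *ᵥ _ + _
  simp only [Dmat, Matrix.diagonal_mulVec_single, hij, hji, pow_zero, one_mul, add_comm]

end BottGroup

theorem Qstd_isOrtho_single {n : ℕ} {i j : Fin n} (h : i ≠ j) :
    (Qstd n).IsOrtho (Pi.single i 1) (Pi.single j 1) := by
  rw [QuadraticMap.isOrtho_def]
  simp only [Qstd, QuadraticMap.weightedSumSquares_apply, one_smul, ← Finset.sum_add_distrib]
  refine Finset.sum_congr rfl fun k _ => ?_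
  rcases eq_or_ne k i with rfl | hi <;> rcases eq_or_ne k j with rfl | hj <;> simp_all

instance (n : ℕ) : CharZero (Cl n) :=
  charZero_of_injective_algebraMap (algebraMap ℝ (Cl n)).injective

namespace CliffordAlgebra

variable {R M : Type*} [CommRing R] [AddCommGroup M] [Module R M] {Q : QuadraticForm R M}

theorem ι_mul_ι_anticomm_of_isOrtho {a b c : M} (hab : Q.IsOrtho a b) (hac : Q.IsOrtho a c)
    (hbc : Q.IsOrtho b c) :
    ι Q a * ι Q b * (ι Q a * ι Q c) = -(ι Q a * ι Q c * (ι Q a * ι Q b)) := by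
  have hba : ι Q b * ι Q a = -(ι Q a * ι Q b) := ι_mul_ι_comm_of_isOrtho hab.symm
  have hca : ι Q c * ι Q a = -(ι Q a * ι Q c) := ι_mul_ι_comm_of_isOrtho hac.symm
  have hcb : ι Q c * ι Q b = -(ι Q b * ι Q c) := ι_mul_ι_comm_of_isOrtho hbc.symm
  calc ι Q a * ι Q b * (ι Q a * ι Q c) = ι Q a * (ι Q b * ι Q a) * ι Q c := by noncomm_ring
    _ = -(ι Q a * ι Q a * (ι Q b * ι Q c)) := by rw [hba]; noncomm_ring
    _ = -(ι Q a * (ι Q c * ι Q a) * ι Q b) := by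
      rw [hca, ← neg_neg (ι Q b * ι Q c), ← hcb]; noncomm_ring
    _ = -(ι Q a * ι Q c * (ι Q a * ι Q b)) := by noncomm_ring

end CliffordAlgebra

theorem mul_eq_neg_mul_of_eq_or_eq_neg {R : Type*} [Ring R] {x y x' y' : R}
    (h : x * y = -(y * x)) (hx : x' = x ∨ x' = -x) (hy : y' = y ∨ y' = -y) :
    x' * y' = -(y' * x') := by
  rcases hx with rfl | rfl <;> rcases hy with rfl | rfl <;> simp [h]

theorem Units.two_eq_zero_of_commute_of_mul_eq_neg {R : Type*} [Ring R] {u v : Rˣ}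
    (hc : Commute u v) (ha : (u * v : R) = -(v * u)) : (2 : R) = 0 := by
  have hc' : (u * v : R) = v * u := congrArg Units.val hc.eq
  have h2 : (2 : R) * (v * u) = 0 := by rw [two_mul]; nth_rw 1 [← hc', ha, neg_add_cancel]
  exact (v * u).isUnit.mul_left_eq_zero.mp (by exact_mod_cast h2)

/-- The real Bott manifold `M(A₄₀)` has no Spin structure: no group
homomorphism `ε : Γ(A₄₀) → Cl₅ˣ` satisfies `ε(s₁) = ± ι(e₃) ι(e₅)` and
`ε(s₂) = ± ι(e₃) ι(e₄)` (indices `0`-based below). -/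
theorem A40_no_spin :
    ¬∃ ε : BottGroup A40 →* (Cl 5)ˣ,
      (((ε ⟨sgen A40 0, sgen_mem A40 0⟩ : (Cl 5)ˣ) : Cl 5) =
          CliffordAlgebra.ι (Qstd 5) (Pi.single 2 1) *
            CliffordAlgebra.ι (Qstd 5) (Pi.single 4 1) ∨
        ((ε ⟨sgen A40 0, sgen_mem A40 0⟩ : (Cl 5)ˣ) : Cl 5) =
          -(CliffordAlgebra.ι (Qstd 5) (Pi.single 2 1) *
            CliffordAlgebra.ι (Qstd 5) (Pi.single 4 1))) ∧
      (((ε ⟨sgen A40 1, sgen_mem A40 1⟩ : (Cl 5)ˣ) : Cl 5) =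
          CliffordAlgebra.ι (Qstd 5) (Pi.single 2 1) *
            CliffordAlgebra.ι (Qstd 5) (Pi.single 3 1) ∨
        ((ε ⟨sgen A40 1, sgen_mem A40 1⟩ : (Cl 5)ˣ) : Cl 5) =
          -(CliffordAlgebra.ι (Qstd 5) (Pi.single 2 1) *
            CliffordAlgebra.ι (Qstd 5) (Pi.single 3 1))) := by
  rintro ⟨ε, hε₀, hε₁⟩
  have hs : Commute (⟨sgen A40 0, sgen_mem A40 0⟩ : BottGroup A40) ⟨sgen A40 1, sgen_mem A40 1⟩ :=
    Subtype.ext (sgen_commute (by decide) (by decide) rfl rfl).eq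
  have hanti := CliffordAlgebra.ι_mul_ι_anticomm_of_isOrtho
    (Qstd_isOrtho_single (by decide : (2 : Fin 5) ≠ 4))
    (Qstd_isOrtho_single (by decide : (2 : Fin 5) ≠ 3))
    (Qstd_isOrtho_single (by decide : (4 : Fin 5) ≠ 3))
  exact two_ne_zero (Units.two_eq_zero_of_commute_of_mul_eq_neg (hs.map ε)
    (mul_eq_neg_mul_of_eq_or_eq_neg hanti hε₀ hε₁))
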